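/- Let G be a countable group such that for every ε' > 0 and every finite K' ⊆ G there exists a finite (K', ε')-invariant subset of G (i.e., G is amenable), let (X, 𝓕, μ) be a σ-finite measure space, 1 ≤ p < ∞, and let π be an action of G on X by non-singular bi-measurable bijections, inducing the action ρ on Lᵖ(μ) given by ρ(g)f = (d((π g)_*μ)/dμ)^{1/p} · (f ∘ (π g)⁻¹). Then π is setwise free if and only if for every g ∈ G \ {1}, every u ∈ Lᵖ(μ) with u ≥ 0, and every ε > 0, there exist v, w ∈ Lᵖ(μ) with v ≥ 0, w ≥ 0 such that (1) v ≤ u + w and ‖w‖_p ≤ ε, (2) ‖v ⊓ ρ(g)v‖_p ≤ ε, and (3) ‖v‖_p ≥ (1/3)‖u‖_p − ε. -/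

import Mathlib

open MeasureTheory
open scoped ENNReal

variable {G X : Type*}

/-- The *`K`-boundary* of `H`: the set of `g ∈ G` such that `Kg` meets both `H` and its
complement. -/
def kBoundary [Group G] (K H : Set G) : Set G :=
  {g : G | (∃ k ∈ K, k * g ∈ H) ∧ ∃ k ∈ K, k * g ∉ H}

/-- A finite set `H ⊆ G` is *`(K, ε)`-invariant* if its `K`-boundary has fewer than `ε * |H|`
elements. -/
def KInvariant [Group G] (K : Finset G) (ε : ℝ) (H : Finset G) : Prop :=
  ((kBoundary (K : Set G) (H : Set G)).ncard : ℝ) < ε * H.card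

/-- An action `π` of `G` on a measure space by bijections is *non-singular* if each `π g` is
measurable (hence bi-measurable, as `(π g).symm = π g⁻¹`) and preserves nullity of measurable
sets. -/
def NonSingularHom [Group G] [MeasurableSpace X] (μ : Measure X)
    (π : G →* Equiv.Perm X) : Prop :=
  (∀ g : G, Measurable (π g)) ∧
  ∀ (g : G) (A : Set X), MeasurableSet A → (μ A = 0 ↔ μ ((π g) ⁻¹' A) = 0)

/-- The action `π` is *setwise free* if for every `g ≠ 1` and every measurable set `A` of
positive measure there is a positive-measure measurable `B ⊆ A` with `μ (gB ∆ B) > 0`. -/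
def SetwiseFreeHom [Group G] [MeasurableSpace X] (μ : Measure X)
    (π : G →* Equiv.Perm X) : Prop :=
  ∀ g : G, g ≠ 1 → ∀ A : Set X, MeasurableSet A → 0 < μ A →
    ∃ B : Set X, B ⊆ A ∧ MeasurableSet B ∧ 0 < μ B ∧ 0 < μ (symmDiff ((π g) '' B) B)

/-- The induced action `ρ(g) f = (d((π g)_*μ)/dμ)^{1/p} · (f ∘ (π g)⁻¹)` on `Lᵖ(μ)`. -/
noncomputable def inducedLpAction [Group G] [MeasurableSpace X] (μ : Measure X)
    (π : G →* Equiv.Perm X) (p : ℝ) (g : G) (f : X → ℝ) : X → ℝ :=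
  fun x => (((Measure.map (π g) μ).rnDeriv μ x).toReal) ^ (1 / p) * f ((π g).symm x)

/-! Fix `g ≠ 1`. If `g` acts setwise freely, an exhaustion argument gives a measurable `A`
disjoint from `gA` with `A ∪ gA ∪ g⁻¹A` conull. Then `A`, `gA \ A` and `g⁻¹A \ (A ∪ gA)` are
each disjoint from their `g`-translate and cover almost all of `X`, so one of them, `P`, carries
a third of `‖u‖_p`, and `v = 1_P u` satisfies `v ⊓ ρ(g)v = 0`.

Conversely, if every measurable subset of some `A` of positive finite measure is `g`-invariant
modulo null sets, then `d(g_*μ)/dμ = 1` and `v ∘ g⁻¹ = v` a.e. on `A`, so `ρ(g)v = v` there. For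
`u = 1_A` this gives `‖v‖_p ≤ ‖v ⊓ ρ(g)v‖_p + ‖w‖_p ≤ 2ε`, which is incompatible with
`‖v‖_p ≥ ‖u‖_p / 3 - ε` for `ε = ‖u‖_p / 10`. -/

open Set

section SingleTransformation

variable [MeasurableSpace X] {μ : Measure X}

/-- Greedy exhaustion: the `n`-th enlargement comes within `1 / (n + 1)` of the supremum of `ν`
over the members of `S` containing the current set. -/
lemma exists_measureReal_maximal_of_iUnion_mem (ν : Measure X) [IsFiniteMeasure ν]
    {S : Set (Set X)} (hS : S.Nonempty)
    (hU : ∀ W : ℕ → Set X, Monotone W → (∀ n, W n ∈ S) → ⋃ n, W n ∈ S) :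
    ∃ W ∈ S, ∀ W' ∈ S, W ⊆ W' → ν.real W' ≤ ν.real W := by
  have step : ∀ (n : ℕ) (W : S), ∃ W' : S, (W : Set X) ⊆ W' ∧
      ∀ W'' ∈ S, (W : Set X) ⊆ W'' → ν.real W'' < ν.real W' + 1 / (n + 1) := by
    intro n W
    set T := ν.real '' {W'' | W'' ∈ S ∧ (W : Set X) ⊆ W''}
    have hT : BddAbove T := ⟨ν.real univ, by
      rintro _ ⟨W'', -, rfl⟩; exact measureReal_mono (subset_univ _)⟩
    obtain ⟨_, ⟨W', ⟨hW'S, hWW'⟩, rfl⟩, hlt⟩ := exists_lt_of_lt_csSup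
      ⟨_, mem_image_of_mem ν.real (show (W : Set X) ∈ {W'' | W'' ∈ S ∧ (W : Set X) ⊆ W''} from
        ⟨W.2, subset_rfl⟩)⟩
      (sub_lt_self (sSup T) (by positivity : (0 : ℝ) < 1 / (n + 1)))
    refine ⟨⟨W', hW'S⟩, hWW', fun W'' hW''S hWW'' => ?_⟩
    have := le_csSup hT ⟨W'', ⟨hW''S, hWW''⟩, rfl⟩
    linarith
  choose F hFsub hFlt using step
  obtain ⟨W₀, hW₀⟩ := hS
  let W : ℕ → S := fun n => Nat.rec ⟨W₀, hW₀⟩ (fun k Wk => F k Wk) n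
  have hWmono : Monotone fun n => (W n).1 := monotone_nat_of_le_succ fun n => hFsub n (W n)
  refine ⟨⋃ n, (W n).1, hU _ hWmono fun n => (W n).2, fun W' hW'S hW' => ?_⟩
  refine le_of_forall_pos_lt_add fun ε hε => ?_
  obtain ⟨n, hn⟩ := exists_nat_one_div_lt hε
  calc ν.real W' < ν.real (W (n + 1)).1 + 1 / (n + 1) :=
        hFlt n (W n) W' hW'S ((subset_iUnion (fun n => (W n).1) n).trans hW')
    _ ≤ ν.real (⋃ n, (W n).1) + ε := by
        gcongr
        · exact measure_ne_top ν _
        · exact subset_iUnion (fun n => (W n).1) (n + 1)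

lemma measurableSet_image_of_measurable_symm {e : X ≃ X} (he : Measurable e.symm) {s : Set X}
    (hs : MeasurableSet s) : MeasurableSet (e '' s) :=
  e.image_eq_preimage_symm s ▸ he hs

/-- `SetwiseFreeHom μ π` unfolds to `∀ g ≠ 1, SetwiseFree μ (π g)`. -/
def SetwiseFree (μ : Measure X) (e : X ≃ X) : Prop :=
  ∀ A : Set X, MeasurableSet A → 0 < μ A →
    ∃ B : Set X, B ⊆ A ∧ MeasurableSet B ∧ 0 < μ B ∧ 0 < μ (symmDiff (e '' B) B)

section Wandering

variable {e : X ≃ X}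

lemma exists_subset_disjoint_image_of_measure_symmDiff_pos (he : Measurable e)
    (he' : Measure.QuasiMeasurePreserving e.symm μ μ) {B : Set X} (hB : MeasurableSet B)
    (h : 0 < μ (symmDiff (e '' B) B)) :
    ∃ C ⊆ B, MeasurableSet C ∧ 0 < μ C ∧ Disjoint C (e '' C) := by
  by_cases h₁ : μ (B \ e '' B) = 0
  · refine ⟨B \ e ⁻¹' B, sdiff_subset, hB.diff (he hB), ?_, ?_⟩
    · have himage : e '' (B \ e ⁻¹' B) = e '' B \ B := by
        rw [image_sdiff e.injective, e.image_preimage]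
      have h₂ : 0 < μ (e '' B \ B) := by
        rw [symmDiff_def] at h
        exact pos_of_ne_zero fun h₂ => h.ne' (measure_union_null h₂ h₁)
      rw [← himage, e.image_eq_preimage_symm] at h₂
      exact pos_of_ne_zero fun h₃ => h₂.ne' (he'.preimage_null h₃)
    · rw [image_sdiff e.injective, e.image_preimage]
      exact disjoint_sdiff_right.mono_left sdiff_subset
  · exact ⟨B \ e '' B, sdiff_subset,
      hB.diff (measurableSet_image_of_measurable_symm he'.measurable hB), pos_of_ne_zero h₁,
      disjoint_sdiff_left.mono_right (image_mono sdiff_subset)⟩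

lemma SetwiseFree.exists_disjoint_image_ae_cover [SFinite μ] (hfree : SetwiseFree μ e)
    (he : Measurable e) (he' : Measure.QuasiMeasurePreserving e.symm μ μ) :
    ∃ A, MeasurableSet A ∧ Disjoint A (e '' A) ∧ μ (A ∪ e '' A ∪ e ⁻¹' A)ᶜ = 0 := by
  set S := {W : Set X | MeasurableSet W ∧ Disjoint W (e '' W)}
  have hU : ∀ W : ℕ → Set X, Monotone W → (∀ n, W n ∈ S) → ⋃ n, W n ∈ S := by
    refine fun W hmono hW => ⟨.iUnion fun n => (hW n).1, ?_⟩
    simp only [image_iUnion, disjoint_iUnion_left, disjoint_iUnion_right]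
    exact fun n m => (hW (max n m)).2.mono (hmono (le_max_right n m))
      (image_mono (hmono (le_max_left n m)))
  obtain ⟨A, ⟨hAm, hAdisj⟩, hmax⟩ :=
    exists_measureReal_maximal_of_iUnion_mem μ.toFinite ⟨∅, by simp [S]⟩ hU
  refine ⟨A, hAm, hAdisj, ?_⟩
  -- otherwise a wandering set of positive measure outside `A ∪ e '' A ∪ e ⁻¹' A` enlarges `A`
  by_contra hR
  have heA := measurableSet_image_of_measurable_symm he'.measurable hAm
  obtain ⟨B, hBR, hBm, -, hBpos⟩ :=
    hfree _ ((hAm.union heA).union (he hAm)).compl (pos_of_ne_zero hR)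
  obtain ⟨C, hCB, hCm, hCpos, hCdisj⟩ :=
    exists_subset_disjoint_image_of_measure_symmDiff_pos he he' hBm hBpos
  have hCR := hCB.trans hBR
  simp only [compl_union] at hCR
  have hAC : A ∪ C ∈ S := by
    refine ⟨hAm.union hCm, ?_⟩
    rw [image_union, disjoint_union_left, disjoint_union_right, disjoint_union_right]
    refine ⟨⟨hAdisj, ?_⟩, disjoint_compl_left.mono_left (hCR.trans (inter_subset_left.trans
      inter_subset_right)), hCdisj⟩
    exact disjoint_left.2 fun _ hxA ⟨c, hc, hcx⟩ => (hCR hc).2 (show e c ∈ A from hcx ▸ hxA)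
  have hle := hmax _ hAC subset_union_left
  rw [measureReal_union (disjoint_compl_right.mono_right (hCR.trans (inter_subset_left.trans
    inter_subset_left))) hCm] at hle
  have hC0 : μ.toFinite C = 0 := by
    rw [← measureReal_eq_zero_iff]
    linarith [measureReal_nonneg (μ := μ.toFinite) (s := C)]
  exact hCpos.ne' (absolutelyContinuous_toFinite μ hC0)

lemma SetwiseFree.exists_three_disjoint_image_ae_cover [SFinite μ] (hfree : SetwiseFree μ e)
    (he : Measurable e) (he' : Measure.QuasiMeasurePreserving e.symm μ μ) :
    ∃ P : Fin 3 → Set X, (∀ i, MeasurableSet (P i)) ∧ (∀ i, Disjoint (P i) (e '' P i)) ∧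
      ∀ᵐ x ∂μ, ∃ i, x ∈ P i := by
  obtain ⟨A, hAm, hAdisj, hnull⟩ := hfree.exists_disjoint_image_ae_cover he he'
  have heA := measurableSet_image_of_measurable_symm he'.measurable hAm
  refine ⟨![A, e '' A \ A, e ⁻¹' A \ (A ∪ e '' A)], ?_, ?_, ?_⟩
  · intro i
    fin_cases i
    exacts [hAm, heA.diff hAm, (he hAm).diff (hAm.union heA)]
  · intro i
    fin_cases i
    · exact hAdisj
    · simp only [Fin.reduceFinMk, Matrix.cons_val]
      rw [image_sdiff e.injective]
      exact disjoint_sdiff_right.mono_left sdiff_subset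
    · simp only [Fin.reduceFinMk, Matrix.cons_val]
      exact disjoint_sdiff_left.mono_right
        ((image_mono sdiff_subset).trans ((image_preimage_subset e A).trans subset_union_left))
  · filter_upwards [measure_eq_zero_iff_ae_notMem.1 hnull] with x hx
    simp only [mem_compl_iff, not_not] at hx
    by_cases hxA : x ∈ A
    · exact ⟨0, hxA⟩
    by_cases hxeA : x ∈ e '' A
    · exact ⟨1, hxeA, hxA⟩
    · exact ⟨2, hx.resolve_left (not_or.2 ⟨hxA, hxeA⟩), not_or.2 ⟨hxA, hxeA⟩⟩

end Wandering

lemma exists_eLpNorm_le_card_mul_eLpNorm_indicator {ι E : Type*} [Fintype ι] [Nonempty ι]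
    [NormedAddCommGroup E] {p : ℝ≥0∞} (hp : 1 ≤ p) {P : ι → Set X}
    (hP : ∀ i, MeasurableSet (P i)) (hcover : ∀ᵐ x ∂μ, ∃ i, x ∈ P i) {u : X → E}
    (hu : AEStronglyMeasurable u μ) :
    ∃ i, eLpNorm u p μ ≤ Fintype.card ι * eLpNorm ((P i).indicator u) p μ := by
  obtain ⟨i, -, hi⟩ := Finset.exists_max_image Finset.univ
    (fun i => eLpNorm ((P i).indicator u) p μ) Finset.univ_nonempty
  refine ⟨i, ?_⟩
  calc eLpNorm u p μ ≤ eLpNorm (∑ j, fun x => ‖(P j).indicator u x‖) p μ := by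
        refine eLpNorm_mono_ae ?_
        filter_upwards [hcover] with x ⟨j, hj⟩
        rw [Finset.sum_apply, Real.norm_of_nonneg (Finset.sum_nonneg fun _ _ => norm_nonneg _)]
        calc ‖u x‖ = ‖(P j).indicator u x‖ := by rw [indicator_of_mem hj]
          _ ≤ _ := Finset.single_le_sum (f := fun k => ‖(P k).indicator u x‖)
            (fun _ _ => norm_nonneg _) (Finset.mem_univ j)
    _ ≤ ∑ j, eLpNorm (fun x => ‖(P j).indicator u x‖) p μ :=
        eLpNorm_sum_le (fun j _ => (hu.indicator (hP j)).norm) hp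
    _ ≤ ∑ _j : ι, eLpNorm ((P i).indicator u) p μ := by
        simp only [eLpNorm_norm]
        exact Finset.sum_le_sum fun j _ => hi j (Finset.mem_univ j)
    _ = Fintype.card ι * eLpNorm ((P i).indicator u) p μ := by
        simp [Finset.sum_const, nsmul_eq_mul]

lemma min_indicator_mul_comp_symm_ae_eq_zero {e : X ≃ X}
    (he' : Measure.QuasiMeasurePreserving e.symm μ μ) {P : Set X} (hP : Disjoint P (e '' P))
    {u c : X → ℝ} (hu : ∀ᵐ x ∂μ, 0 ≤ u x) (hc : ∀ x, 0 ≤ c x) :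
    (fun x => min (P.indicator u x) (c x * P.indicator u (e.symm x))) =ᵐ[μ] 0 := by
  filter_upwards [hu, he'.ae hu] with x hx hx'
  by_cases hxP : x ∈ P
  · have hx'P : e.symm x ∉ P := fun h => disjoint_left.1 hP hxP ⟨_, h, e.apply_symm_apply x⟩
    simp [indicator_of_mem hxP, indicator_of_notMem hx'P, hx]
  · rw [indicator_of_notMem hxP]
    exact min_eq_left (mul_nonneg (hc x) (indicator_nonneg (fun _ _ => hx') _))



lemma ae_apply_symm_eq_of_forall_image_ae_eq {e : X ≃ X}
    (he' : Measure.QuasiMeasurePreserving e.symm μ μ) {A : Set X} (hA : MeasurableSet A)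
    (hinv : ∀ B ⊆ A, MeasurableSet B → e '' B =ᵐ[μ] B) {v : X → ℝ} (hv : AEMeasurable v μ) :
    ∀ᵐ x ∂μ, x ∈ A → v (e.symm x) = v x := by
  have hlevel : ∀ᵐ x ∂μ, ∀ q : ℚ,
      (e.symm x ∈ A ∩ {y | q < hv.mk v y} ↔ x ∈ A ∩ {y | q < hv.mk v y}) := by
    refine ae_all_iff.2 fun q => ?_
    have h := hinv (A ∩ {y | (q : ℝ) < hv.mk v y}) inter_subset_left
      (hA.inter (measurableSet_lt measurable_const hv.measurable_mk))
    rw [e.image_eq_preimage_symm] at h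
    exact Filter.eventuallyEq_set.1 h
  have hAinv := hinv A subset_rfl hA
  rw [e.image_eq_preimage_symm] at hAinv
  filter_upwards [hlevel, Filter.eventuallyEq_set.1 hAinv, hv.ae_eq_mk, he'.ae hv.ae_eq_mk]
    with x hq hsA hx hsx hxA
  rw [hx, hsx]
  exact eq_of_forall_rat_lt_iff_lt fun q =>
    ⟨fun h => ((hq q).1 ⟨hsA.2 hxA, h⟩).2, fun h => ((hq q).2 ⟨hxA, h⟩).2⟩

lemma ae_rnDeriv_map_eq_one_of_forall_image_ae_eq [SigmaFinite μ] {e : X ≃ X}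
    (he : Measure.QuasiMeasurePreserving e μ μ) {A : Set X} (hA : MeasurableSet A)
    (hinv : ∀ B ⊆ A, MeasurableSet B → e '' B =ᵐ[μ] B) :
    ∀ᵐ x ∂μ, x ∈ A → (μ.map e).rnDeriv μ x = 1 := by
  have hrestrict : (μ.map e).restrict A = μ.restrict A := by
    ext s hs
    rw [Measure.restrict_apply hs, Measure.restrict_apply hs,
      Measure.map_apply he.measurable (hs.inter hA)]
    refine measure_congr ?_
    simpa [e.preimage_image] using
      (he.preimage_ae_eq (hinv _ inter_subset_right (hs.inter hA))).symm
  have h₁ := Measure.rnDeriv_restrict (μ.map e) μ hA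
  rw [hrestrict] at h₁
  filter_upwards [h₁, Measure.rnDeriv_restrict_self μ hA] with x h₁ h₂ hxA
  simpa [indicator_of_mem hxA, h₂] using h₁.symm

lemma eLpNorm_le_eLpNorm_min_add {p : ℝ≥0∞} (hp : 1 ≤ p) {A : Set X} (hA : MeasurableSet A)
    {v h w : X → ℝ} (hv : AEStronglyMeasurable v μ) (hv0 : ∀ᵐ x ∂μ, 0 ≤ v x)
    (hh : ∀ᵐ x ∂μ, x ∈ A → h x = v x) (hvw : ∀ᵐ x ∂μ, x ∉ A → v x ≤ w x) :
    eLpNorm v p μ ≤ eLpNorm (fun x => min (v x) (h x)) p μ + eLpNorm w p μ := by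
  calc eLpNorm v p μ = eLpNorm (A.indicator v + Aᶜ.indicator v) p μ := by
        rw [indicator_self_add_compl]
    _ ≤ eLpNorm (A.indicator v) p μ + eLpNorm (Aᶜ.indicator v) p μ :=
        eLpNorm_add_le (hv.indicator hA) (hv.indicator hA.compl) hp
    _ ≤ _ := by
      gcongr ?_ + ?_
      · refine eLpNorm_mono_ae ?_
        filter_upwards [hh] with x hx
        by_cases hxA : x ∈ A
        · simp [indicator_of_mem hxA, hx hxA]
        · simp [indicator_of_notMem hxA]
      · refine eLpNorm_mono_ae ?_
        filter_upwards [hv0, hvw] with x hx0 hx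
        by_cases hxA : x ∈ A
        · simp [hxA]
        · rw [indicator_of_mem (mem_compl hxA), Real.norm_of_nonneg hx0]
          exact (hx hxA).trans (Real.le_norm_self _)

end SingleTransformation

namespace NonSingularHom

variable [Group G] [MeasurableSpace X] {μ : Measure X} {π : G →* Equiv.Perm X}

lemma quasiMeasurePreserving (hns : NonSingularHom μ π) (g : G) :
    Measure.QuasiMeasurePreserving (π g) μ μ :=
  ⟨hns.1 g, .mk fun s hs h0 => by
    rw [Measure.map_apply (hns.1 g) hs]; exact (hns.2 g s hs).1 h0⟩

lemma quasiMeasurePreserving_symm (hns : NonSingularHom μ π) (g : G) :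
    Measure.QuasiMeasurePreserving (π g).symm μ μ := by
  rw [← Equiv.Perm.inv_def, ← map_inv]
  exact hns.quasiMeasurePreserving g⁻¹

lemma ae_inducedLpAction_eq_of_forall_image_ae_eq [SigmaFinite μ] (hns : NonSingularHom μ π)
    (p : ℝ) (g : G) {A : Set X} (hA : MeasurableSet A)
    (hinv : ∀ B ⊆ A, MeasurableSet B → (π g) '' B =ᵐ[μ] B) {v : X → ℝ}
    (hv : AEMeasurable v μ) :
    ∀ᵐ x ∂μ, x ∈ A → inducedLpAction μ π p g v x = v x := by
  filter_upwards
    [ae_rnDeriv_map_eq_one_of_forall_image_ae_eq (hns.quasiMeasurePreserving g) hA hinv,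
    ae_apply_symm_eq_of_forall_image_ae_eq (hns.quasiMeasurePreserving_symm g) hA hinv hv]
    with x h₁ h₂ hxA
  simp [inducedLpAction, h₁ hxA, h₂ hxA]

end NonSingularHom

section AlmostDisjointPart

variable [Group G] [MeasurableSpace X] {μ : Measure X} {π : G →* Equiv.Perm X} {p : ℝ}

def HasAlmostDisjointPart (μ : Measure X) (π : G →* Equiv.Perm X) (p : ℝ) (g : G) : Prop :=
  ∀ u : X → ℝ, MemLp u (ENNReal.ofReal p) μ → (∀ᵐ x ∂μ, 0 ≤ u x) → ∀ ε : ℝ, 0 < ε →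
    ∃ v w : X → ℝ, MemLp v (ENNReal.ofReal p) μ ∧ MemLp w (ENNReal.ofReal p) μ ∧
      (∀ᵐ x ∂μ, 0 ≤ v x) ∧ (∀ᵐ x ∂μ, 0 ≤ w x) ∧
      (∀ᵐ x ∂μ, v x ≤ u x + w x) ∧
      eLpNorm w (ENNReal.ofReal p) μ ≤ ENNReal.ofReal ε ∧
      eLpNorm (fun x => min (v x) (inducedLpAction μ π p g v x)) (ENNReal.ofReal p) μ ≤
        ENNReal.ofReal ε ∧
      (1 / 3) * (eLpNorm u (ENNReal.ofReal p) μ).toReal - ε ≤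
        (eLpNorm v (ENNReal.ofReal p) μ).toReal

lemma SetwiseFree.hasAlmostDisjointPart [SFinite μ] (hns : NonSingularHom μ π) (hp : 1 ≤ p)
    {g : G} (hfree : SetwiseFree μ (π g)) : HasAlmostDisjointPart μ π p g := by
  intro u hu hu0 ε hε
  obtain ⟨P, hPm, hPdisj, hcover⟩ := hfree.exists_three_disjoint_image_ae_cover
    (hns.quasiMeasurePreserving g).measurable (hns.quasiMeasurePreserving_symm g)
  obtain ⟨i, hi⟩ := exists_eLpNorm_le_card_mul_eLpNorm_indicator
    (ENNReal.one_le_ofReal.2 hp) hPm hcover hu.1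
  have hv := hu.indicator (hPm i)
  refine ⟨(P i).indicator u, 0, hv, .zero, ?_, ae_of_all _ fun _ => le_rfl, ?_, by simp, ?_, ?_⟩
  · filter_upwards [hu0] with x hx using indicator_nonneg (fun _ _ => hx) x
  · filter_upwards [hu0] with x hx
    by_cases hxP : x ∈ P i <;> simp [hxP, hx]
  · have hmin : (fun x => min ((P i).indicator u x)
        (inducedLpAction μ π p g ((P i).indicator u) x)) =ᵐ[μ] 0 :=
      min_indicator_mul_comp_symm_ae_eq_zero (hns.quasiMeasurePreserving_symm g) (hPdisj i) hu0
        fun x => by positivity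
    simp [eLpNorm_congr_ae hmin]
  · have h := ENNReal.toReal_mono (ENNReal.mul_ne_top (by simp) hv.eLpNorm_ne_top) hi
    rw [ENNReal.toReal_mul] at h
    simp only [Fintype.card_fin] at h
    norm_num at h
    linarith

lemma HasAlmostDisjointPart.setwiseFree [SigmaFinite μ] (hns : NonSingularHom μ π) (hp : 1 ≤ p)
    {g : G} (happrox : HasAlmostDisjointPart μ π p g) : SetwiseFree μ (π g) := by
  intro A hA hApos
  by_contra! hfix
  obtain ⟨A', hA'm, hA'A, hA'pos, hA'fin⟩ := Measure.exists_subset_measure_lt_top hA hApos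
  have hinv : ∀ B ⊆ A', MeasurableSet B → (π g) '' B =ᵐ[μ] B := by
    intro B hB hBm
    rw [← measure_symmDiff_eq_zero_iff]
    rcases eq_zero_or_pos (μ B) with h0 | hpos
    · refine measure_mono_null symmDiff_subset_union (measure_union_null ?_ h0)
      rw [Equiv.image_eq_preimage_symm]
      exact (hns.quasiMeasurePreserving_symm g).preimage_null h0
    · exact nonpos_iff_eq_zero.1 (hfix B (hB.trans hA'A) hBm hpos)
  have hq : 1 ≤ ENNReal.ofReal p := ENNReal.one_le_ofReal.2 hp
  set u := A'.indicator fun _ => (1 : ℝ)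
  have hu : MemLp u (ENNReal.ofReal p) μ := memLp_indicator_const _ hA'm 1 (Or.inr hA'fin.ne)
  have hu_pos : 0 < (eLpNorm u (ENNReal.ofReal p) μ).toReal := by
    refine ENNReal.toReal_pos ?_ hu.eLpNorm_ne_top
    rw [eLpNorm_indicator_const hA'm (by positivity) ENNReal.ofReal_ne_top]
    exact mul_ne_zero (by simp) (ENNReal.rpow_pos hA'pos hA'fin.ne).ne'
  set ε := (eLpNorm u (ENNReal.ofReal p) μ).toReal / 10 with hε
  obtain ⟨v, w, hv, -, hv0, -, hvw, hw, hmin, hlow⟩ :=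
    happrox u hu (ae_of_all _ fun x => indicator_nonneg (fun _ _ => zero_le_one) x) ε
      (by positivity)
  have hvle := eLpNorm_le_eLpNorm_min_add hq hA'm hv.1 hv0
    (hns.ae_inducedLpAction_eq_of_forall_image_ae_eq p g hA'm hinv hv.1.aemeasurable)
    (by filter_upwards [hvw] with x hx hxA; simpa [u, hxA] using hx)
  have hv_small : (eLpNorm v (ENNReal.ofReal p) μ).toReal ≤ 2 * ε := by
    refine ENNReal.toReal_le_of_le_ofReal (by positivity) (hvle.trans ?_)
    rw [two_mul, ENNReal.ofReal_add (by positivity) (by positivity)]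
    exact add_le_add hmin hw
  linarith

theorem setwiseFree_iff_hasAlmostDisjointPart [SigmaFinite μ] (hns : NonSingularHom μ π)
    (hp : 1 ≤ p) (g : G) : SetwiseFree μ (π g) ↔ HasAlmostDisjointPart μ π p g :=
  ⟨fun h => h.hasAlmostDisjointPart hns hp, fun h => h.setwiseFree hns hp⟩

end AlmostDisjointPart

theorem setwiseFree_iff_approx_general [Group G] [MeasurableSpace X]
    (μ : Measure X) [SigmaFinite μ]
    (p : ℝ) (hp : 1 ≤ p) (π : G →* Equiv.Perm X) (hns : NonSingularHom μ π) :
    SetwiseFreeHom μ π ↔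
      ∀ g : G, g ≠ 1 → ∀ u : X → ℝ, MemLp u (ENNReal.ofReal p) μ →
        (∀ᵐ x ∂μ, 0 ≤ u x) → ∀ ε : ℝ, 0 < ε →
        ∃ v w : X → ℝ, MemLp v (ENNReal.ofReal p) μ ∧ MemLp w (ENNReal.ofReal p) μ ∧
          (∀ᵐ x ∂μ, 0 ≤ v x) ∧ (∀ᵐ x ∂μ, 0 ≤ w x) ∧
          (∀ᵐ x ∂μ, v x ≤ u x + w x) ∧
          eLpNorm w (ENNReal.ofReal p) μ ≤ ENNReal.ofReal ε ∧
          eLpNorm (fun x => min (v x) (inducedLpAction μ π p g v x)) (ENNReal.ofReal p) μ ≤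
            ENNReal.ofReal ε ∧
          (1 / 3) * (eLpNorm u (ENNReal.ofReal p) μ).toReal - ε ≤
            (eLpNorm v (ENNReal.ofReal p) μ).toReal :=
  forall₂_congr fun g _ => setwiseFree_iff_hasAlmostDisjointPart hns hp g

/-- characterisation of setwise freeness of a non-singular action of a
countable amenable group in purely Banach-lattice terms. -/
theorem setwiseFree_iff_approx [Group G] [Countable G] [MeasurableSpace X]
    (μ : Measure X) [SigmaFinite μ]
    (hamen : ∀ ε' : ℝ, 0 < ε' → ∀ K' : Finset G, ∃ H : Finset G, KInvariant K' ε' H)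
    (p : ℝ) (hp : 1 ≤ p) (π : G →* Equiv.Perm X) (hns : NonSingularHom μ π) :
    SetwiseFreeHom μ π ↔
      ∀ g : G, g ≠ 1 → ∀ u : X → ℝ, MemLp u (ENNReal.ofReal p) μ →
        (∀ᵐ x ∂μ, 0 ≤ u x) → ∀ ε : ℝ, 0 < ε →
        ∃ v w : X → ℝ, MemLp v (ENNReal.ofReal p) μ ∧ MemLp w (ENNReal.ofReal p) μ ∧
          (∀ᵐ x ∂μ, 0 ≤ v x) ∧ (∀ᵐ x ∂μ, 0 ≤ w x) ∧
          (∀ᵐ x ∂μ, v x ≤ u x + w x) ∧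
          eLpNorm w (ENNReal.ofReal p) μ ≤ ENNReal.ofReal ε ∧
          eLpNorm (fun x => min (v x) (inducedLpAction μ π p g v x)) (ENNReal.ofReal p) μ ≤
            ENNReal.ofReal ε ∧
          (1 / 3) * (eLpNorm u (ENNReal.ofReal p) μ).toReal - ε ≤
            (eLpNorm v (ENNReal.ofReal p) μ).toReal :=
  setwiseFree_iff_approx_general μ p hp π hns
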